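/- Let X be a complex Banach space and L(X) the Banach algebra of bounded linear operators on X. Let A, B ∈ L(X) have Hirano inverses A^H and B^H. If A^H B = 0, A B^H = 0 and B^π A B A^π = 0, where A^π = I − A·A^H and B^π = I − B·B^H, then A + B has a Hirano inverse. -/

import Mathlib

/-- `a` has a Hirano inverse: there exists `z` with `az = za`, `z = zaz`,
and `a^2 - az` nilpotent. -/
def HasHiranoInverse {R : Type*} [Ring R] (a : R) : Prop :=
  ∃ z : R, a * z = z * a ∧ z = z * a * z ∧ IsNilpotent (a ^ 2 - a * z)

/-- `a` has a strongly Drazin inverse: there exists `z` with `az = za`, `z = zaz`,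
and `a - az` nilpotent. -/
def HasStronglyDrazinInverse {R : Type*} [Ring R] (a : R) : Prop :=
  ∃ z : R, a * z = z * a ∧ z = z * a * z ∧ IsNilpotent (a - a * z)

/-!
An element `a` of a ring has a Hirano inverse iff `a - a³` is nilpotent. Given the inverse,
`a - a³` splits into commuting nilpotent pieces along the idempotent `p = a a^H`. Conversely, in
the commutative subring generated by `a` one lifts `a²` modulo the nilradical to an idempotent `e`;
then `a² - e` is nilpotent, `u = 1 + a² - e` is a unit and `a e u⁻¹` is the Hirano inverse.

So it suffices to show that `x - x³` is nilpotent for `x = A + B`, and this property passes from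
the diagonal blocks of a block triangular element (`(1 - e) x e = 0` for an idempotent `e`) to the
element. With `p = A A^H` and `q = B B^H`, the hypotheses make `A + B` triangular for `1 - p`,
with diagonal blocks `A p` and `(A + B)(1 - p)`. The latter is triangular for `q`, with diagonal
blocks `B q` and `u + v`, where `u = (1 - q) A (1 - p)` and `v = (1 - q) B (1 - p)` are nilpotent
and `B^π A B A^π = 0` gives `u v = 0`.
-/

section Ring

variable {R : Type*} [Ring R]

theorem isNilpotent_mul_comm {a b : R} (h : IsNilpotent (a * b)) : IsNilpotent (b * a) := by
  obtain ⟨n, hn⟩ := h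
  exact ⟨n + 1, by rw [pow_succ', mul_assoc, ← mul_pow_mul, hn, zero_mul, mul_zero]⟩

theorem isNilpotent_add_of_mul_eq_zero {a b : R} (hab : a * b = 0) (ha : IsNilpotent a)
    (hb : IsNilpotent b) : IsNilpotent (a + b) := by
  obtain ⟨m, hm⟩ := ha
  obtain ⟨l, hl⟩ := hb
  have ha_mul_pow : ∀ n : ℕ, a * (a + b) ^ n = a ^ (n + 1) := by
    intro n
    induction n with
    | zero => simp
    | succ n ih =>
      rw [pow_succ', ← mul_assoc, mul_add, hab, add_zero, mul_assoc, ih, ← pow_succ']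
  have pow_add_eq : ∀ k : ℕ, (a + b) ^ (m + k) = b ^ k * (a + b) ^ m := by
    intro k
    induction k with
    | zero => simp
    | succ k ih =>
      rw [← add_assoc, pow_succ', add_mul, ha_mul_pow, pow_eq_zero_of_le (by omega) hm, zero_add,
        ih, ← mul_assoc, ← pow_succ']
  exact ⟨m + l, by rw [pow_add_eq, hl, zero_mul]⟩

theorem IsNilpotent.sub_pow_three {a : R} (h : IsNilpotent a) : IsNilpotent (a - a ^ 3) := by
  rw [show a - a ^ 3 = a * (1 - a ^ 2) by noncomm_ring]
  exact ((Commute.one_right a).sub_right ((Commute.refl a).pow_right 2)).isNilpotent_mul_right h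

theorem isNilpotent_mul_sub_pow_three {a e : R} (he : IsIdempotentElem e) (hc : Commute a e)
    (h : IsNilpotent (a - a ^ 3)) : IsNilpotent (a * e - (a * e) ^ 3) := by
  rw [hc.mul_pow, he.pow_succ_eq 2, ← sub_mul]
  exact (hc.sub_left (hc.pow_left 3)).isNilpotent_mul_right h

end Ring

section Corner

variable {R : Type*} [Ring R] {e x y : R}

theorem IsIdempotentElem.corner_mul (he : IsIdempotentElem e) (hy : (1 - e) * y * e = 0) :
    e * (x * y) * e = (e * x * e) * (e * y * e) := by
  linear_combination (norm := noncomm_ring) e * x * hy - e * x * he.eq * y * e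

theorem IsIdempotentElem.corner_one_sub_mul (he : IsIdempotentElem e)
    (hx : (1 - e) * x * e = 0) :
    (1 - e) * (x * y) * (1 - e) = ((1 - e) * x * (1 - e)) * ((1 - e) * y * (1 - e)) := by
  linear_combination (norm := noncomm_ring)
    hx * y * (1 - e) - (1 - e) * x * he.one_sub.eq * y * (1 - e)

theorem lower_corner_mul_eq_zero (hx : (1 - e) * x * e = 0) (hy : (1 - e) * y * e = 0) :
    (1 - e) * (x * y) * e = 0 := by
  linear_combination (norm := noncomm_ring) hx * y * e + (1 - e) * x * hy

theorem IsIdempotentElem.isNilpotent_of_corners (he : IsIdempotentElem e)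
    (hx : (1 - e) * x * e = 0) (h₁ : IsNilpotent (e * x * e))
    (h₂ : IsNilpotent ((1 - e) * x * (1 - e))) : IsNilpotent x := by
  rw [show x = x * (1 - e) + x * e by noncomm_ring]
  refine isNilpotent_add_of_mul_eq_zero ?_ ?_ ?_
  · rw [show x * (1 - e) * (x * e) = x * ((1 - e) * x * e) by noncomm_ring, hx, mul_zero]
  · rw [← he.one_sub.eq, ← mul_assoc]
    exact isNilpotent_mul_comm (by rwa [← mul_assoc])
  · rw [← he.eq, ← mul_assoc]
    exact isNilpotent_mul_comm (by rwa [← mul_assoc])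

theorem IsIdempotentElem.isNilpotent_sub_pow_three_of_corners (he : IsIdempotentElem e)
    (hx : (1 - e) * x * e = 0) (h₁ : IsNilpotent (e * x * e - (e * x * e) ^ 3))
    (h₂ : IsNilpotent ((1 - e) * x * (1 - e) - ((1 - e) * x * (1 - e)) ^ 3)) :
    IsNilpotent (x - x ^ 3) := by
  have hx2 : (1 - e) * (x * x) * e = 0 := lower_corner_mul_eq_zero hx hx
  apply he.isNilpotent_of_corners
  · rw [mul_sub, sub_mul, hx, pow_three, lower_corner_mul_eq_zero hx hx2, sub_zero]
  · rwa [mul_sub, sub_mul, pow_three, he.corner_mul hx2, he.corner_mul hx, ← pow_three]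
  · rwa [mul_sub (1 - e), sub_mul _ _ (1 - e), pow_three, he.corner_one_sub_mul hx,
      he.corner_one_sub_mul hx, ← pow_three]

end Corner

theorem exists_isIdempotentElem_isNilpotent_sub {R : Type*} [CommRing R] {x : R}
    (h : IsNilpotent (x - x ^ 2)) : ∃ e, IsIdempotentElem e ∧ IsNilpotent (x - e) := by
  let f := Ideal.Quotient.mk (nilradical R)
  have hf : IsIdempotentElem (f x) := by
    rwa [IsIdempotentElem, ← map_mul, eq_comm, Ideal.Quotient.eq, mem_nilradical, ← sq]
  obtain ⟨e, he, hfe⟩ := exists_isIdempotentElem_eq_of_ker_isNilpotent f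
    (fun y hy ↦ mem_nilradical.1 (by rwa [Ideal.mk_ker] at hy)) (f x) ⟨x, rfl⟩ hf
  exact ⟨e, he, mem_nilradical.1 (Ideal.Quotient.eq.1 hfe.symm)⟩

def IsHiranoInverse {R : Type*} [Ring R] (a z : R) : Prop :=
  a * z = z * a ∧ z = z * a * z ∧ IsNilpotent (a ^ 2 - a * z)

namespace IsHiranoInverse

variable {R : Type*} [Ring R] {a z : R}

theorem map {S F : Type*} [Ring S] [FunLike F R S] [RingHomClass F R S] (h : IsHiranoInverse a z)
    (f : F) : IsHiranoInverse (f a) (f z) := by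
  obtain ⟨hcomm, hzaz, hnil⟩ := h
  refine ⟨by rw [← map_mul, hcomm, map_mul], by rw [← map_mul, ← map_mul, ← hzaz], ?_⟩
  simpa only [map_sub, map_pow, map_mul] using hnil.map f

theorem isIdempotentElem (h : IsHiranoInverse a z) : IsIdempotentElem (a * z) := by
  rw [IsIdempotentElem, mul_assoc, ← mul_assoc z, ← h.2.1]

theorem commute (h : IsHiranoInverse a z) : Commute a (a * z) :=
  (Commute.refl a).mul_right h.1

theorem commute_one_sub_sq_sub (h : IsHiranoInverse a z) :
    Commute (1 - a * z) (a ^ 2 - a * z) :=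
  (Commute.one_left _).sub_left ((h.commute.symm.pow_right 2).sub_right (Commute.refl _))

theorem isNilpotent_mul_one_sub (h : IsHiranoInverse a z) : IsNilpotent (a * (1 - a * z)) := by
  have hsq : (a * (1 - a * z)) ^ 2 = (a ^ 2 - a * z) * (1 - a * z) := by
    linear_combination (norm := noncomm_ring) a * h.commute.eq * (1 - a * z)
      + a ^ 2 * h.isIdempotentElem.eq - h.isIdempotentElem.eq
  exact IsNilpotent.of_pow (m := 2)
    (hsq ▸ h.commute_one_sub_sq_sub.symm.isNilpotent_mul_right h.2.2)

theorem isNilpotent_sub_pow_three (h : IsHiranoInverse a z) : IsNilpotent (a - a ^ 3) := by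
  have h₁ : Commute a (1 - a * z) := (Commute.one_right a).sub_right h.commute
  have h₂ : Commute a (a ^ 2 - a * z) := ((Commute.refl a).pow_right 2).sub_right h.commute
  rw [show a - a ^ 3 = a * (1 - a * z) - a * (a ^ 2 - a * z) by noncomm_ring]
  exact (((Commute.refl a).mul_right h₂).mul_left (h₁.symm.mul_right h.commute_one_sub_sq_sub)
    ).isNilpotent_sub h.isNilpotent_mul_one_sub (h₂.isNilpotent_mul_left h.2.2)

end IsHiranoInverse

theorem hasHiranoInverse_of_isNilpotent_sub_pow_three_of_comm {R : Type*} [CommRing R] {a : R}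
    (h : IsNilpotent (a - a ^ 3)) : HasHiranoInverse a := by
  obtain ⟨e, he, hae⟩ := exists_isIdempotentElem_isNilpotent_sub (x := a ^ 2) <| by
    rw [show a ^ 2 - (a ^ 2) ^ 2 = a * (a - a ^ 3) by ring]
    exact (Commute.all _ _).isNilpotent_mul_left h
  obtain ⟨v, hv⟩ := hae.isUnit_one_add.exists_right_inv
  have haz : a * (a * e * v) = e := by linear_combination v * he.eq + e * hv
  refine ⟨a * e * v, mul_comm _ _, ?_, by rwa [haz]⟩
  linear_combination (-(a * e * v)) * haz - a * v * he.eq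

open scoped IsMulCommutative in
theorem hasHiranoInverse_of_isNilpotent_sub_pow_three {R : Type*} [Ring R] {a : R}
    (h : IsNilpotent (a - a ^ 3)) : HasHiranoInverse a := by
  let S := Subring.closure ({a} : Set R)
  have : IsMulCommutative S := Subring.isMulCommutative_closure (by simp)
  obtain ⟨z, hz⟩ := hasHiranoInverse_of_isNilpotent_sub_pow_three_of_comm
    (a := ⟨a, Subring.subset_closure rfl⟩)
    ((IsNilpotent.map_iff (f := S.subtype) Subtype.val_injective).1 h)
  exact ⟨z, IsHiranoInverse.map hz S.subtype⟩

section Perturbation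

variable {R : Type*} [Ring R] {a b p q : R}

theorem isNilpotent_add_mul_one_sub_sub_pow_three (hq : IsIdempotentElem q) (hbq : Commute b q)
    (hb : IsNilpotent (b - b ^ 3)) (ha' : IsNilpotent (a * (1 - p)))
    (hb' : IsNilpotent (b * (1 - q))) (hpb : p * b = 0) (haq : a * q = 0) (hpq : p * q = 0)
    (hab : (1 - q) * a * b * (1 - p) = 0) :
    IsNilpotent ((a + b) * (1 - p) - ((a + b) * (1 - p)) ^ 3) := by
  have hlower : (1 - q) * ((a + b) * (1 - p)) * q = 0 := by
    linear_combination (norm := noncomm_ring)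
      -(1 - q) * (a + b) * hpq + (1 - q) * haq + (1 - q) * hbq.eq - hq.eq * b
  have hupper : q * ((a + b) * (1 - p)) * q = b * q := by
    linear_combination (norm := noncomm_ring)
      -q * (a + b) * hpq + q * haq + q * hbq.eq + hq.eq * b - hbq.eq
  have hdiag : (1 - q) * ((a + b) * (1 - p)) * (1 - q)
      = (1 - q) * a * (1 - p) + (1 - q) * b * (1 - p) := by
    linear_combination (norm := noncomm_ring)
      (1 - q) * (a + b) * hpq - (1 - q) * haq - (1 - q) * hbq.eq + hq.eq * b
  have hu : IsNilpotent ((1 - q) * a * (1 - p)) := by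
    have : a * (1 - p) * (1 - q) = a * (1 - p) := by
      linear_combination (norm := noncomm_ring) -haq + a * hpq
    rw [mul_assoc]
    exact isNilpotent_mul_comm (by rwa [this])
  have hv : IsNilpotent ((1 - q) * b * (1 - p)) := by
    have : (1 - p) * (b * (1 - q)) = b * (1 - q) := by
      linear_combination (norm := noncomm_ring) -hpb * (1 - q)
    rw [((Commute.one_left b).sub_left hbq.symm).eq]
    exact isNilpotent_mul_comm (by rwa [this])
  have huv : (1 - q) * a * (1 - p) * ((1 - q) * b * (1 - p)) = 0 := by
    linear_combination (norm := noncomm_ring)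
      -(1 - q) * a * hpb * (1 - p) + (1 - q) * a * hpq * b * (1 - p) + hab
        - (1 - q) * haq * b * (1 - p)
  refine hq.isNilpotent_sub_pow_three_of_corners hlower ?_ ?_
  · rw [hupper]
    exact isNilpotent_mul_sub_pow_three hq hbq hb
  · rw [hdiag]
    exact (isNilpotent_add_of_mul_eq_zero huv hu hv).sub_pow_three

theorem IsHiranoInverse.isNilpotent_add_sub_pow_three {a' b' : R} (ha : IsHiranoInverse a a')
    (hb : IsHiranoInverse b b') (h₁ : a' * b = 0) (h₂ : a * b' = 0)
    (h₃ : (1 - b * b') * a * b * (1 - a * a') = 0) : IsNilpotent (a + b - (a + b) ^ 3) := by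
  set p := a * a'
  set q := b * b'
  have hp : p * p = p := ha.isIdempotentElem.eq
  have hap : a * p = p * a := ha.commute.eq
  have hpb : p * b = 0 := by rw [show p * b = a * (a' * b) from mul_assoc .., h₁, mul_zero]
  have haq : a * q = 0 := by rw [show q = b' * b from hb.1, ← mul_assoc, h₂, zero_mul]
  have hpq : p * q = 0 := by rw [show p * q = p * b * b' from (mul_assoc ..).symm, hpb, zero_mul]
  have hlower : (1 - (1 - p)) * (a + b) * (1 - p) = 0 := by
    linear_combination (norm := noncomm_ring) -a * hp - hap * (1 - p) + hpb * (1 - p)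
  have hupper : (1 - (1 - p)) * (a + b) * (1 - (1 - p)) = a * p := by
    linear_combination (norm := noncomm_ring) a * hp - hap * p + hpb * p
  have hdiag : (1 - p) * (a + b) * (1 - p) = (a + b) * (1 - p) := by
    linear_combination (norm := noncomm_ring) a * hp + hap * (1 - p) - hpb * (1 - p)
  refine ha.isIdempotentElem.one_sub.isNilpotent_sub_pow_three_of_corners hlower ?_ ?_
  · rw [hdiag]
    exact isNilpotent_add_mul_one_sub_sub_pow_three hb.isIdempotentElem hb.commute
      hb.isNilpotent_sub_pow_three ha.isNilpotent_mul_one_sub hb.isNilpotent_mul_one_sub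
      hpb haq hpq h₃
  · rw [hupper]
    exact isNilpotent_mul_sub_pow_three ha.isIdempotentElem ha.commute
      ha.isNilpotent_sub_pow_three

end Perturbation

variable {X : Type*} [NormedAddCommGroup X] [NormedSpace ℂ X] [CompleteSpace X]

theorem hirano_add_perturb (A B AH BH : X →L[ℂ] X)
    (hAH : A * AH = AH * A ∧ AH = AH * A * AH ∧ IsNilpotent (A ^ 2 - A * AH))
    (hBH : B * BH = BH * B ∧ BH = BH * B * BH ∧ IsNilpotent (B ^ 2 - B * BH))
    (h1 : AH * B = 0)
    (h2 : A * BH = 0)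
    (h3 : (1 - B * BH) * A * B * (1 - A * AH) = 0) :
    HasHiranoInverse (A + B) :=
  hasHiranoInverse_of_isNilpotent_sub_pow_three
    (IsHiranoInverse.isNilpotent_add_sub_pow_three hAH hBH h1 h2 h3)
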